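/- arXiv:0711.1157 — 2 statements merged into one kernel-verified Lean document; each statement's English description precedes it below -/
import Mathlib

section
/- Deleting two adjacent vertices from the Heawood graph yields a graph isomorphic to the Möbius ladder M₄ with each rung subdivided once: the induced subgraph of the Heawood graph on the 12 vertices other than the adjacent pair (point 0, line 1) is isomorphic to the subdivided Möbius ladder. -/
/-!
The two deleted vertices are adjacent, so each keeps two further neighbours: lines 2 and 4 of
point 0, points 4 and 6 of line 1. These four vertices become the midpoints of the subdivided
rungs; the remaining eight vertices form an 8-cycle in which every rung joins antipodal
vertices.
-/

/-- The Heawood graph as the bipartite incidence graph of the Fano plane. -/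
def heawoodGraph : SimpleGraph (ZMod 7 ⊕ ZMod 7) :=
  SimpleGraph.fromRel (fun u v => ∃ i j : ZMod 7,
    u = Sum.inl i ∧ v = Sum.inr j ∧ (j - i = 1 ∨ j - i = 2 ∨ j - i = 4))

/-- The Möbius ladder `M₄` with each rung subdivided once: vertices `Fin 8 ⊕ Fin 4`, cycle
edges `{inl i, inl (i+1)}` for `i : Fin 8`, and for each `k : Fin 4` the subdivided rung
edges `{inl k, inr k}` and `{inr k, inl (k+4)}`. -/
def subdividedMobiusLadder : SimpleGraph (Fin 8 ⊕ Fin 4) :=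
  SimpleGraph.fromRel (fun u v =>
    (∃ i : Fin 8, u = Sum.inl i ∧ v = Sum.inl (i + 1)) ∨
    (∃ k : Fin 4,
      (u = Sum.inl (Fin.castLE (by omega) k) ∧ v = Sum.inr k) ∨
      (u = Sum.inr k ∧ v = Sum.inl (Fin.castLE (by omega) k + 4))))

instance : DecidableRel heawoodGraph.Adj := fun a b =>
  decidable_of_iff _ (SimpleGraph.fromRel_adj _ a b).symm

instance : DecidableRel subdividedMobiusLadder.Adj := fun a b =>
  decidable_of_iff _ (SimpleGraph.fromRel_adj _ a b).symm

def ladderToHeawood : Fin 8 ⊕ Fin 4 → ZMod 7 ⊕ ZMod 7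
  | .inl 0 => .inl 1
  | .inl 1 => .inr 3
  | .inl 2 => .inl 2
  | .inl 3 => .inr 6
  | .inl 4 => .inl 5
  | .inl 5 => .inr 0
  | .inl 6 => .inl 3
  | .inl 7 => .inr 5
  | .inr 0 => .inr 2
  | .inr 1 => .inl 6
  | .inr 2 => .inr 4
  | .inr 3 => .inl 4

theorem ladderToHeawood_injective : Function.Injective ladderToHeawood := by
  decide

theorem heawoodGraph_adj_ladderToHeawood (v w : Fin 8 ⊕ Fin 4) :
    heawoodGraph.Adj (ladderToHeawood v) (ladderToHeawood w) ↔ subdividedMobiusLadder.Adj v w := by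
  revert v w
  decide

def ladderEmbedding : subdividedMobiusLadder ↪g heawoodGraph :=
  ⟨⟨ladderToHeawood, ladderToHeawood_injective⟩, heawoodGraph_adj_ladderToHeawood _ _⟩

theorem range_ladderToHeawood :
    Set.range ladderToHeawood = {v | v ≠ Sum.inl 0 ∧ v ≠ Sum.inr 1} := by
  ext v
  simp only [Set.mem_range]
  revert v
  decide

/-- Deleting the two adjacent vertices `inl 0` (point 0) and `inr 1` (line 1) from the
Heawood graph yields a graph isomorphic to the Möbius ladder `M₄` with each rung
subdivided once. -/
theorem heawood_minus_two_vertices_iso_subdivided_mobius_ladder :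
    Nonempty
      ((heawoodGraph.induce {v : ZMod 7 ⊕ ZMod 7 | v ≠ Sum.inl 0 ∧ v ≠ Sum.inr 1}) ≃g
        subdividedMobiusLadder) := by
  rw [← range_ladderToHeawood]
  exact ⟨ladderEmbedding.isoInduceRange.symm⟩
end

section
/- The Heawood graph minus one edge is unit-distance embeddable: there exists an injective map f : (ZMod 7 ⊕ ZMod 7) → ℝ² such that for every point i and line j with j - i ∈ {1, 2, 4}, except the single pair (i, j) = (0, 1), one has dist (f (inl i)) (f (inr j)) = 1. -/
/-! The circle of radius `65 = 5 · 13` carries 36 lattice points, so there are 36 unit vectors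
with coordinates in `(1/65) ℤ`. Drawing the vertices on the lattice `(1/65) ℤ²` with every edge
along one of these directions, the embedding is certified by exact integer arithmetic. -/

open Function

noncomputable def latticePoint (n : ℤ) (p : ℤ × ℤ) : EuclideanSpace ℝ (Fin 2) :=
  (n : ℝ)⁻¹ • !₂[(p.1 : ℝ), p.2]

lemma latticePoint_injective {n : ℤ} (hn : n ≠ 0) : Injective (latticePoint n) := by
  intro p q hpq
  have hn' : (n : ℝ)⁻¹ ≠ 0 := inv_ne_zero (Int.cast_ne_zero.mpr hn)
  have h := smul_right_injective _ hn' hpq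
  have h0 : (p.1 : ℝ) = q.1 := congrArg (· 0) h
  have h1 : (p.2 : ℝ) = q.2 := congrArg (· 1) h
  exact Prod.ext (by exact_mod_cast h0) (by exact_mod_cast h1)

lemma dist_latticePoint_eq_one {n : ℤ} (hn : 0 < n) {p q : ℤ × ℤ}
    (h : (p.1 - q.1) ^ 2 + (p.2 - q.2) ^ 2 = n ^ 2) :
    dist (latticePoint n p) (latticePoint n q) = 1 := by
  have hn' : (0 : ℝ) < n := by exact_mod_cast hn
  have hsq : ((p.1 : ℝ) - q.1) ^ 2 + ((p.2 : ℝ) - q.2) ^ 2 = (n : ℝ) ^ 2 := by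
    exact_mod_cast h
  rw [latticePoint, latticePoint, dist_smul₀, EuclideanSpace.dist_eq, Fin.sum_univ_two]
  simp only [Matrix.cons_val_zero, Matrix.cons_val_one, Real.dist_eq, sq_abs,
    hsq, Real.sqrt_sq hn'.le, norm_inv, Real.norm_eq_abs, abs_of_pos hn']
  exact inv_mul_cancel₀ hn'.ne'

def heawoodCoords : ZMod 7 ⊕ ZMod 7 → ℤ × ℤ :=
  Sum.elim ![(20, -35), (60, 25), (-52, -39), (-44, 77), (-39, 52), (-65, 0), (-48, 19)]
    ![(-104, 52), (17, 19), (-5, 25), (8, -14), (-19, 17), (21, 77), (0, 0)]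

lemma heawoodCoords_injective : Injective heawoodCoords := by decide

lemma heawoodCoords_sq_dist (i j : ZMod 7) (hij : j - i = 1 ∨ j - i = 2 ∨ j - i = 4)
    (hne : (i, j) ≠ (0, 1)) :
    ((heawoodCoords (.inl i)).1 - (heawoodCoords (.inr j)).1) ^ 2 +
      ((heawoodCoords (.inl i)).2 - (heawoodCoords (.inr j)).2) ^ 2 = 65 ^ 2 := by
  revert i j
  decide

/-- The Heawood graph minus the edge between point `0` and line `1` is unit-distance
embeddable. Here the Heawood graph is the Fano incidence graph on `ZMod 7 ⊕ ZMod 7`, with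
`inl i` adjacent to `inr j` iff `j - i ∈ {1, 2, 4}`. -/
theorem heawood_minus_edge_unit_distance_embeddable :
    ∃ f : ZMod 7 ⊕ ZMod 7 → EuclideanSpace ℝ (Fin 2),
      Function.Injective f ∧
        ∀ i j : ZMod 7, (j - i = 1 ∨ j - i = 2 ∨ j - i = 4) → (i, j) ≠ (0, 1) →
          dist (f (Sum.inl i)) (f (Sum.inr j)) = 1 :=
  ⟨latticePoint 65 ∘ heawoodCoords,
    (latticePoint_injective (by norm_num)).comp heawoodCoords_injective,
    fun i j hij hne => dist_latticePoint_eq_one (by norm_num) (heawoodCoords_sq_dist i j hij hne)⟩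
end
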